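/- arXiv:math/0304295 — 2 statements merged into one kernel-verified Lean document; each statement's English description precedes it below -/
import Mathlib

section
/- With the hypotheses of the decomposition above, the quantity dim V0 − dim V1 is independent of the choice of decomposition: if D = L ⊕ L' and D = M ⊕ M' are two such decompositions with finite dimensional pieces V0, V1 and U0, U1 respectively, then dim V0 − dim V1 = dim U0 − dim U1. -/
/-!
Both sides equal the index `dim ker D - dim coker D`, which therefore does not depend on the
decomposition: conjugating by linear equivalences does not change kernel and cokernel up to
isomorphism, the index of a direct sum is the sum of the indices, an isomorphism has index `0`,
and a map between finite dimensional spaces has index `dim V0 - dim V1` by rank–nullity.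
-/

open Module LinearMap

namespace LinearMap

section Ring

variable {R M N P : Type*} [Ring R] [AddCommGroup M] [AddCommGroup N] [AddCommGroup P]
  [Module R M] [Module R N] [Module R P]

theorem index_equiv_comp (e : N ≃ₗ[R] P) (f : M →ₗ[R] N) :
    (e.toLinearMap ∘ₗ f).index = f.index := by
  have hrange : range (e.toLinearMap ∘ₗ f) = (range f).map e.toLinearMap := range_comp f _
  rw [index_eq_finrank_sub, index_eq_finrank_sub, LinearEquiv.ker_comp,
    (Submodule.Quotient.equiv _ _ e hrange.symm).finrank_eq]

theorem index_comp_equiv (f : N →ₗ[R] P) (e : M ≃ₗ[R] N) :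
    (f ∘ₗ e.toLinearMap).index = f.index := by
  have hker : ker (f ∘ₗ e.toLinearMap) = (ker f).map e.symm.toLinearMap := by
    rw [ker_comp, Submodule.comap_equiv_eq_map_symm]
  rw [index_eq_finrank_sub, index_eq_finrank_sub, hker, LinearEquiv.finrank_map_eq,
    range_comp_of_range_eq_top _ e.range]

end Ring

end LinearMap

namespace Submodule

variable {k M N : Type*} [DivisionRing k] [AddCommGroup M] [AddCommGroup N]
  [Module k M] [Module k N] (p : Submodule k M) (q : Submodule k N)

theorem finrank_prod [FiniteDimensional k p] [FiniteDimensional k q] :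
    finrank k (p.prod q) = finrank k p + finrank k q := by
  have hinj : Function.Injective (p.subtype.prodMap q.subtype) :=
    Prod.map_injective.2 ⟨p.injective_subtype, q.injective_subtype⟩
  rw [← Module.finrank_prod, ← finrank_range_of_inj hinj, range_prodMap, range_subtype,
    range_subtype]

theorem finrank_quotient_prod [FiniteDimensional k (M ⧸ p)] [FiniteDimensional k (N ⧸ q)] :
    finrank k ((M × N) ⧸ p.prod q) = finrank k (M ⧸ p) + finrank k (N ⧸ q) := by
  have hsurj : Function.Surjective (p.mkQ.prodMap q.mkQ) :=
    Prod.map_surjective.2 ⟨p.mkQ_surjective, q.mkQ_surjective⟩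
  have hker : ker (p.mkQ.prodMap q.mkQ) = p.prod q := by
    rw [ker_prodMap, ker_mkQ, ker_mkQ]
  rw [← Module.finrank_prod, ← hker, (quotKerEquivOfSurjective _ hsurj).finrank_eq]

end Submodule

namespace LinearMap

section DivisionRing

variable {k M N M' N' : Type*} [DivisionRing k] [AddCommGroup M] [AddCommGroup N]
  [AddCommGroup M'] [AddCommGroup N'] [Module k M] [Module k N] [Module k M'] [Module k N']

theorem index_prodMap (f : M →ₗ[k] N) (g : M' →ₗ[k] N')
    [FiniteDimensional k (ker f)] [FiniteDimensional k (ker g)]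
    [FiniteDimensional k (N ⧸ range f)] [FiniteDimensional k (N' ⧸ range g)] :
    (f.prodMap g).index = f.index + g.index := by
  rw [index_eq_finrank_sub, index_eq_finrank_sub, index_eq_finrank_sub, ker_prodMap,
    range_prodMap, Submodule.finrank_prod, Submodule.finrank_quotient_prod]
  push_cast
  ring

theorem index_prodMap_equiv (f : M →ₗ[k] N) (e : M' ≃ₗ[k] N')
    [FiniteDimensional k (ker f)] [FiniteDimensional k (N ⧸ range f)] :
    (f.prodMap e.toLinearMap).index = f.index := by
  have : FiniteDimensional k (ker e.toLinearMap) := by rw [LinearEquiv.ker]; infer_instance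
  have : FiniteDimensional k (N' ⧸ range e.toLinearMap) := by
    rw [LinearEquiv.range]; infer_instance
  rw [index_prodMap, LinearEquiv.index_eq_zero, add_zero]

end DivisionRing

theorem index_eq_finrank_sub_of_conj_eq_prodMap
    {k E0 E1 V0 W0 V1 W1 : Type*} [DivisionRing k]
    [AddCommGroup E0] [Module k E0] [AddCommGroup E1] [Module k E1]
    [AddCommGroup V0] [Module k V0] [AddCommGroup W0] [Module k W0]
    [AddCommGroup V1] [Module k V1] [AddCommGroup W1] [Module k W1]
    [FiniteDimensional k V0] [FiniteDimensional k V1]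
    {D : E0 →ₗ[k] E1} (e0 : E0 ≃ₗ[k] V0 × W0) (e1 : E1 ≃ₗ[k] V1 × W1)
    {L : V0 →ₗ[k] V1} (L' : W0 ≃ₗ[k] W1)
    (hL : (e1 : E1 →ₗ[k] V1 × W1) ∘ₗ D ∘ₗ (e0.symm : V0 × W0 →ₗ[k] E0) =
      LinearMap.prodMap L (L' : W0 →ₗ[k] W1)) :
    D.index = finrank k V0 - finrank k V1 := by
  rw [← index_comp_equiv D e0.symm, ← index_equiv_comp e1, hL, index_prodMap_equiv,
    index_eq_of_finiteDimensional]

end LinearMap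

/-- Well-definedness of the index: if `D : E0 → E1` admits two block-diagonal
decompositions `D = L ⊕ L'` (w.r.t. splittings `E0 ≃ V0 × W0`, `E1 ≃ V1 × W1`) and
`D = M ⊕ M'` (w.r.t. `E0 ≃ U0 × X0`, `E1 ≃ U1 × X1`), with `V0, V1, U0, U1` finite
dimensional and `L', M'` isomorphisms, then `dim V0 - dim V1 = dim U0 - dim U1`. -/
theorem index_well_defined
    {k : Type*} [Field k]
    {E0 E1 V0 W0 V1 W1 U0 X0 U1 X1 : Type*}
    [AddCommGroup E0] [Module k E0] [AddCommGroup E1] [Module k E1]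
    [AddCommGroup V0] [Module k V0] [AddCommGroup W0] [Module k W0]
    [AddCommGroup V1] [Module k V1] [AddCommGroup W1] [Module k W1]
    [AddCommGroup U0] [Module k U0] [AddCommGroup X0] [Module k X0]
    [AddCommGroup U1] [Module k U1] [AddCommGroup X1] [Module k X1]
    [FiniteDimensional k V0] [FiniteDimensional k V1]
    [FiniteDimensional k U0] [FiniteDimensional k U1]
    (D : E0 →ₗ[k] E1)
    (e0 : E0 ≃ₗ[k] V0 × W0) (e1 : E1 ≃ₗ[k] V1 × W1)
    (f0 : E0 ≃ₗ[k] U0 × X0) (f1 : E1 ≃ₗ[k] U1 × X1)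
    (L : V0 →ₗ[k] V1) (L' : W0 ≃ₗ[k] W1)
    (M : U0 →ₗ[k] U1) (M' : X0 ≃ₗ[k] X1)
    (hL : (e1 : E1 →ₗ[k] V1 × W1) ∘ₗ D ∘ₗ (e0.symm : V0 × W0 →ₗ[k] E0) =
      LinearMap.prodMap L (L' : W0 →ₗ[k] W1))
    (hM : (f1 : E1 →ₗ[k] U1 × X1) ∘ₗ D ∘ₗ (f0.symm : U0 × X0 →ₗ[k] E0) =
      LinearMap.prodMap M (M' : X0 →ₗ[k] X1)) :
    (Module.finrank k V0 : ℤ) - Module.finrank k V1 =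
      (Module.finrank k U0 : ℤ) - Module.finrank k U1 := by
  rw [← LinearMap.index_eq_finrank_sub_of_conj_eq_prodMap e0 e1 L' hL,
    ← LinearMap.index_eq_finrank_sub_of_conj_eq_prodMap f0 f1 M' hM]
end

section
/- Let D : E0 → E1 be a linear map admitting a decomposition D = L ⊕ L' with L : V0 → V1 between finite dimensional spaces and L' : W0 → W1 an isomorphism. Then there exists a decomposition of D in which V0 = ker D, the finite dimensional block map is zero, and V1 is isomorphic to coker D. -/
/-! Since `L'` is an isomorphism, `ker D = ker L × 0` and `range D = range L × W1`. Choosing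
complements `C` of `ker L` in `V0` and `J` of `range L` in `V1`, the decomposition
`E0 = ker D ⊕ (C × W0)`, `E1 = (J × 0) ⊕ (range L × W1)` works: `D` maps `C × W0` onto
`range D = range L × W1`, and `J × 0` is a complement of `range D`, hence isomorphic to
`coker D`. -/

theorem Submodule.isCompl_prod_prod {R M N : Type*} [Ring R] [AddCommGroup M] [Module R M]
    [AddCommGroup N] [Module R N] {p p' : Submodule R M} {q q' : Submodule R N}
    (hp : IsCompl p p') (hq : IsCompl q q') : IsCompl (p.prod q) (p'.prod q') where
  disjoint := disjoint_iff.2 <| by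
    rw [prod_inf_prod, hp.inf_eq_bot, hq.inf_eq_bot, prod_bot]
  codisjoint := codisjoint_iff.2 <| by
    rw [prod_sup_prod, hp.sup_eq_top, hq.sup_eq_top, prod_top]

theorem kuranishi_decomposition_general
    {k : Type*} [Field k]
    {V0 W0 V1 W1 : Type*}
    [AddCommGroup V0] [Module k V0] [AddCommGroup W0] [Module k W0]
    [AddCommGroup V1] [Module k V1] [AddCommGroup W1] [Module k W1]
    (L : V0 →ₗ[k] V1) (L' : W0 ≃ₗ[k] W1)
    (D : (V0 × W0) →ₗ[k] (V1 × W1))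
    (hD : D = LinearMap.prodMap L (L' : W0 →ₗ[k] W1)) :
    ∃ (W0' : Submodule k (V0 × W0)) (V1' W1' : Submodule k (V1 × W1)),
      IsCompl (LinearMap.ker D) W0' ∧
      IsCompl V1' W1' ∧
      Submodule.map D W0' = W1' ∧
      Nonempty (V1' ≃ₗ[k] ((V1 × W1) ⧸ LinearMap.range D)) := by
  subst hD
  obtain ⟨C, hC⟩ := Submodule.exists_isCompl (LinearMap.ker L)
  obtain ⟨J, hJ⟩ := Submodule.exists_isCompl (LinearMap.range L)
  have hker : LinearMap.ker (L.prodMap (L' : W0 →ₗ[k] W1)) = (LinearMap.ker L).prod ⊥ := by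
    rw [LinearMap.ker_prodMap, LinearEquiv.ker]
  have hrange : LinearMap.range (L.prodMap (L' : W0 →ₗ[k] W1)) = (LinearMap.range L).prod ⊤ := by
    rw [LinearMap.range_prodMap, LinearEquiv.range]
  refine ⟨C.prod ⊤, J.prod ⊥, (LinearMap.range L).prod ⊤, ?_, ?_, ?_, ?_⟩
  · rw [hker]
    exact Submodule.isCompl_prod_prod hC isCompl_bot_top
  · exact Submodule.isCompl_prod_prod hJ.symm isCompl_top_bot.symm
  · rw [LinearMap.prodMap_map_prod, Submodule.map_eq_range_iff.2 hC.symm.codisjoint,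
      Submodule.map_top, LinearEquiv.range]
  · rw [hrange]
    exact ⟨(Submodule.quotientEquivOfIsCompl _ _
      (Submodule.isCompl_prod_prod hJ isCompl_top_bot)).symm⟩

/-- If `D = L ⊕ L'` with `L` between finite dimensional spaces and `L'` an isomorphism,
then `D` admits a decomposition in which the finite dimensional summand of the source is
`ker D`, the finite dimensional block map is zero (i.e. `D` kills `ker D` and carries the
complement `W0'` isomorphically onto a complement `W1'` of `V1'`), and `V1'` is isomorphic
to `coker D`. -/
theorem kuranishi_decomposition
    {k : Type*} [Field k]
    {V0 W0 V1 W1 : Type*}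
    [AddCommGroup V0] [Module k V0] [AddCommGroup W0] [Module k W0]
    [AddCommGroup V1] [Module k V1] [AddCommGroup W1] [Module k W1]
    [FiniteDimensional k V0] [FiniteDimensional k V1]
    (L : V0 →ₗ[k] V1) (L' : W0 ≃ₗ[k] W1)
    (D : (V0 × W0) →ₗ[k] (V1 × W1))
    (hD : D = LinearMap.prodMap L (L' : W0 →ₗ[k] W1)) :
    ∃ (W0' : Submodule k (V0 × W0)) (V1' W1' : Submodule k (V1 × W1)),
      IsCompl (LinearMap.ker D) W0' ∧
      IsCompl V1' W1' ∧
      Submodule.map D W0' = W1' ∧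
      Nonempty (V1' ≃ₗ[k] ((V1 × W1) ⧸ LinearMap.range D)) :=
  kuranishi_decomposition_general L L' D hD
end
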